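/- Let f₀ : {0,1}^p → ℝ have multilinear expansion with coefficients β_J. Suppose that g_J(x_{J^c}) — the partial difference of f₀ with respect to J — is constant on {0,1}^{J^c}. Then f₀ possesses no statistical interaction J ∪ {j'} for any j' ∈ J^c; that is, for each such j', f₀ can be written as a sum of functions each of which omits at least one coordinate of J ∪ {j'}. -/

import Mathlib

/-!
Write `g(S) = ∑_{A ⊆ S} β (J ∪ A)` for `S ⊆ Jᶜ`. If `g` is constant, Möbius inversion (here a
strong induction on `A`) gives `β (J ∪ A) = 0` for every nonempty `A ⊆ Jᶜ`, i.e. `β` vanishes on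
all strict supersets of `J`, in particular on all supersets of `K = J ∪ {j'}`. Hence every nonzero
monomial `β T` of `f₀` misses some coordinate of `K`; spreading it evenly over the
`#(K \ T)` coordinates it misses writes `f₀` as a sum of functions `F ℓ` each blind to its `ℓ ∈ K`.
-/

open Finset

variable {α : Type*} [DecidableEq α]

theorem Finset.eq_zero_of_sum_powerset_eq_apply_empty {M : Type*} [AddCommGroup M]
    {γ : Finset α → M} (A : Finset α)
    (hγ : ∀ B ⊆ A, ∑ C ∈ B.powerset, γ C = γ ∅) (hA : A.Nonempty) : γ A = 0 := by
  induction A using Finset.strongInduction with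
  | H A ih =>
    have hproper : ∑ C ∈ A.powerset.erase A, γ C = γ ∅ := by
      refine sum_eq_single_of_mem ∅ (mem_erase.2 ⟨hA.ne_empty.symm, mem_powerset.2 (empty_subset A)⟩)
        fun C hC hCne => ?_
      have hCA : C ⊂ A := ssubset_iff_subset_ne.2 ⟨mem_powerset.1 (mem_of_mem_erase hC),
        ne_of_mem_erase hC⟩
      exact ih C hCA (fun B hB => hγ B (hB.trans hCA.subset)) (nonempty_iff_ne_empty.2 hCne)
    have htotal := hγ A subset_rfl
    rwa [← add_sum_erase _ _ (mem_powerset_self A), hproper, add_eq_right] at htotal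

theorem Finset.eq_zero_of_ssuperset_of_sum_powerset_union_const [Fintype α] {M : Type*}
    [AddCommGroup M] {β : Finset α → M} {J : Finset α}
    (hconst : ∀ S₁ ⊆ Jᶜ, ∀ S₂ ⊆ Jᶜ,
      (∑ J₂ ∈ S₁.powerset, β (J ∪ J₂)) = ∑ J₂ ∈ S₂.powerset, β (J ∪ J₂))
    {T : Finset α} (hJT : J ⊂ T) : β T = 0 := by
  have hcompl : T \ J ⊆ Jᶜ := fun x hx => mem_compl.2 (mem_sdiff.1 hx).2
  have key := eq_zero_of_sum_powerset_eq_apply_empty (γ := fun A => β (J ∪ A)) (T \ J)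
    (fun B hB => (hconst B (hB.trans hcompl) ∅ (empty_subset _)).trans
      (by rw [powerset_empty, sum_singleton])) (sdiff_nonempty.2 hJT.not_subset)
  rwa [union_sdiff_of_subset hJT.subset] at key

theorem Finset.exists_sum_erase_invariant_of_forall_superset_eq_zero {𝕜 : Type*} [Field 𝕜]
    [CharZero 𝕜] (β : Finset α → 𝕜) (K : Finset α) (hβ : ∀ T, K ⊆ T → β T = 0) :
    ∃ F : α → Finset α → 𝕜,
      (∀ ℓ ∈ K, ∀ S : Finset α, F ℓ S = F ℓ (S.erase ℓ)) ∧
      (∀ S : Finset α, ∑ T ∈ S.powerset, β T = ∑ ℓ ∈ K, F ℓ S) := by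
  refine ⟨fun ℓ S => ∑ T ∈ S.powerset with ℓ ∉ T, β T / #(K \ T), fun ℓ _ S => ?_, fun S => ?_⟩
  · refine sum_congr ?_ fun _ _ => rfl
    ext T
    simp only [mem_filter, mem_powerset, subset_erase]
    tauto
  · have hterm : ∀ T, #(K \ T) • (β T / #(K \ T)) = β T := fun T => by
      by_cases hKT : K ⊆ T
      · simp [hβ T hKT]
      · rw [nsmul_eq_mul, mul_div_cancel₀]
        exact Nat.cast_ne_zero.2 (card_ne_zero.2 (sdiff_nonempty.2 hKT))
    simp only [sum_filter]
    rw [sum_comm]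
    refine sum_congr rfl fun T _ => ?_
    rw [← sum_filter, filter_notMem_eq_sdiff, sum_const, hterm]

theorem stmt_10 (p : ℕ) (f₀ β : Finset (Fin p) → ℝ) (J : Finset (Fin p))
    (hexp : ∀ S : Finset (Fin p), f₀ S = ∑ T ∈ S.powerset, β T)
    (hconst : ∀ S₁ ⊆ Jᶜ, ∀ S₂ ⊆ Jᶜ,
      (∑ J₂ ∈ S₁.powerset, β (J ∪ J₂)) = ∑ J₂ ∈ S₂.powerset, β (J ∪ J₂)) :
    ∀ j' ∉ J, ∃ F : Fin p → Finset (Fin p) → ℝ,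
      (∀ ℓ ∈ insert j' J, ∀ S : Finset (Fin p), F ℓ S = F ℓ (S.erase ℓ)) ∧
      (∀ S : Finset (Fin p), f₀ S = ∑ ℓ ∈ insert j' J, F ℓ S) := by
  intro j' hj'
  have hβ : ∀ T, insert j' J ⊆ T → β T = 0 := fun T hT =>
    eq_zero_of_ssuperset_of_sum_powerset_union_const hconst
      ((ssubset_insert hj').trans_subset hT)
  obtain ⟨F, hF, hsum⟩ := exists_sum_erase_invariant_of_forall_superset_eq_zero β _ hβ
  exact ⟨F, hF, fun S => (hexp S).trans (hsum S)⟩
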